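/- For a countably infinite set Ω, each of the sets LF (locally finite permutations), R (permutations with finitely many orbits), and W (permutations with infinitely many infinite orbits) generates S(Ω). -/

import Mathlib

/-- The orbit (cycle) of `x` under the permutation `f`. -/
def orbitOf {Ω : Type*} (f : Equiv.Perm Ω) (x : Ω) : Set Ω :=
  Set.range fun k : ℤ => (f ^ k) x

/-- Locally finite permutations: all orbits are finite. -/
def LFset (Ω : Type*) : Set (Equiv.Perm Ω) := {f | ∀ x, (orbitOf f x).Finite}

/-- Ringed permutations: only finitely many orbits. -/
def RingedSet (Ω : Type*) : Set (Equiv.Perm Ω) := {f | (Set.range (orbitOf f)).Finite}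

/-- Wild permutations: infinitely many infinite orbits. -/
def WildSet (Ω : Type*) : Set (Equiv.Perm Ω) :=
  {f | {O : Set Ω | (∃ x, O = orbitOf f x) ∧ O.Infinite}.Infinite}

/-
Every permutation is a product of two involutions (on each cycle, compose two reflections of the
exponent), and involutions have finite order, hence are locally finite. So it suffices to write
every involution `t` as `u * v⁻¹` with `u`, `v` ringed, resp. wild.

Up to conjugation, `t` is the swap of two copies of a set `T` plus the identity on its fixed
points `F`. If `T` is infinite, identify `T ⊕ T` with `ℤ × (M ⊕ M)`; there the swap is
`(n, s) ↦ (n + 1, swap s)` followed by the inverse of `(n, s) ↦ (n + 1, s)`. Both factors raise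
the `ℤ`-coordinate by one, so every orbit of either is infinite and meets `{0} × (M ⊕ M)` exactly
once: they are ringed for `M = Unit` and wild for `M = ℕ`. The remaining pieces are absorbed by
`(u ⊕ w) * (v ⊕ w)⁻¹ = u * v⁻¹ ⊕ 1`, with `w` ringed on `F`, or, when `T` is finite and hence `F`
infinite, wild on `F`.
-/

open Equiv Equiv.Perm Function Subgroup

section Orbits

variable {α β : Type*}

theorem mem_orbitOf_iff {f : Perm α} {x y : α} : y ∈ orbitOf f x ↔ f.SameCycle x y := Iff.rfl

theorem orbitOf_eq_orbitOf_iff {f : Perm α} {x y : α} :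
    orbitOf f x = orbitOf f y ↔ f.SameCycle x y := by
  refine ⟨fun h => ?_, fun h => Set.ext fun z => ⟨h.symm.trans, h.trans⟩⟩
  rw [← mem_orbitOf_iff, h]
  exact SameCycle.refl f y

theorem mem_LFset_of_isOfFinOrder {f : Perm α} (hf : IsOfFinOrder f) : f ∈ LFset α := by
  intro x
  refine (hf.finite_zpowers.image fun g : Perm α => g x).subset ?_
  rintro _ ⟨k, rfl⟩
  exact ⟨f ^ k, ⟨k, rfl⟩, rfl⟩

theorem zpow_apply_of_semiconj {f : Perm α} {g : Perm β} {j : α → β}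
    (h : ∀ x, j (f x) = g (j x)) (k : ℤ) (x : α) : j ((f ^ k) x) = (g ^ k) (j x) := by
  induction k using Int.induction_on generalizing x with
  | zero => rfl
  | succ k ih => rw [zpow_add_one, zpow_add_one, mul_apply, mul_apply, ih, h]
  | pred k ih =>
    have hinv : j (f⁻¹ x) = g⁻¹ (j x) := by rw [eq_inv_iff_eq, ← h]; simp
    rw [zpow_sub_one, zpow_sub_one, mul_apply, mul_apply, ih, hinv]

theorem image_orbitOf_of_semiconj {f : Perm α} {g : Perm β} {j : α → β}
    (h : ∀ x, j (f x) = g (j x)) (x : α) : j '' orbitOf f x = orbitOf g (j x) := by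
  rw [orbitOf, ← Set.range_comp]
  exact congrArg Set.range (funext fun k => zpow_apply_of_semiconj h k x)

end Orbits

section Involutions

variable {α : Type*}

theorem zpow_sub_apply_eq_of_zpow_apply_eq (g : Perm α) {p q : ℤ} {z : α}
    (h : (g ^ p) z = (g ^ q) z) (c : ℤ) : (g ^ (c - p)) z = (g ^ (c - q)) z := by
  calc (g ^ (c - p)) z = (g ^ (c - p - q)) ((g ^ q) z) := by
        rw [← mul_apply, ← zpow_add, sub_add_cancel]
    _ = (g ^ (c - p - q)) ((g ^ p) z) := by rw [h]
    _ = (g ^ (c - q)) z := by rw [← mul_apply, ← zpow_add]; congr 2; ring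

theorem exists_involutive_mul_involutive (g : Perm α) :
    ∃ a b : Perm α, Involutive a ∧ Involutive b ∧ g = a * b := by
  let r : α → α := fun x => (Quotient.mk (SameCycle.setoid g) x).out
  have hr_eq : ∀ {x y}, g.SameCycle x y → r x = r y := fun h =>
    congrArg Quotient.out (Quotient.sound h)
  choose n hn using fun x => @Quotient.mk_out _ (SameCycle.setoid g) x
  -- `x = g ^ n x (r x)`, and `ρ c` reflects the exponent on each cycle: `n x ↦ c - n x`.
  let ρ : ℤ → α → α := fun c x => (g ^ (c - n x)) (r x)
  have hρ : ∀ c d x, ρ c (ρ d x) = (g ^ (c - d)) x := by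
    intro c d x
    have hr : r (ρ d x) = r x :=
      (hr_eq (x := r x) ⟨d - n x, rfl⟩).symm.trans (hr_eq ⟨n x, hn x⟩)
    have h : (g ^ n (ρ d x)) (r x) = (g ^ (d - n x)) (r x) :=
      (congrArg (g ^ n (ρ d x)) hr.symm).trans (hn _)
    change (g ^ (c - n (ρ d x))) (r (ρ d x)) = _
    rw [hr, zpow_sub_apply_eq_of_zpow_apply_eq g h c, show c - (d - n x) = c - d + n x by ring,
      zpow_add, mul_apply, hn]
  have hinv : ∀ c, Involutive (ρ c) := fun c x => by rw [hρ, sub_self, zpow_zero, one_apply]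
  refine ⟨(hinv 1).toPerm _, (hinv 0).toPerm _, hinv 1, hinv 0, Perm.ext fun x => ?_⟩
  simp [hρ]

theorem eq_top_of_involutive_mem {H : Subgroup (Perm α)}
    (hH : ∀ t : Perm α, Involutive t → t ∈ H) : H = ⊤ := by
  refine eq_top_iff' H |>.2 fun g => ?_
  obtain ⟨a, b, ha, hb, rfl⟩ := exists_involutive_mul_involutive g
  exact mul_mem (hH a ha) (hH b hb)

theorem Function.Involutive.isOfFinOrder {t : Perm α} (ht : Involutive t) : IsOfFinOrder t :=
  isOfFinOrder_iff_pow_eq_one.2 ⟨2, two_pos, Perm.ext ht⟩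

theorem Function.Involutive.exists_permCongr_sumComm {t : Perm α} (ht : Involutive t) :
    ∃ (T F : Set α) (E : (T ⊕ T) ⊕ F ≃ α), t = E.permCongr ((sumComm T T).sumCongr 1) := by
  let _ : LinearOrder α := WellOrderingRel.isWellOrder.linearOrder
  let T : Set α := {x | x < t x}
  let φ : (T ⊕ T) ⊕ {x | t x = x} → α := Sum.elim (Sum.elim (↑) (t ∘ (↑))) (↑)
  have hφ : Bijective φ := by
    constructor
    · rintro ((⟨x, hx⟩ | ⟨x, hx⟩) | ⟨x, hx⟩) ((⟨y, hy⟩ | ⟨y, hy⟩) | ⟨y, hy⟩) h <;>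
        simp only [φ, T, Set.mem_ofPred_eq, Sum.elim_inl, Sum.elim_inr, comp_apply] at hx hy h <;>
        grind [ht x, ht y]
    · intro x
      rcases lt_trichotomy x (t x) with hx | hx | hx
      · exact ⟨.inl (.inl ⟨x, hx⟩), rfl⟩
      · exact ⟨.inr ⟨x, hx.symm⟩, rfl⟩
      · exact ⟨.inl (.inr ⟨t x, by simpa [T, ht x] using hx⟩), ht x⟩
  refine ⟨T, _, Equiv.ofBijective φ hφ, Perm.ext fun x => ?_⟩
  obtain ⟨z, rfl⟩ := (Equiv.ofBijective φ hφ).surjective x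
  rw [permCongr_apply, symm_apply_apply]
  rcases z with (x | x) | ⟨x, hx⟩
  · simp [φ]
  · simp [φ, ht _]
  · exact hx

end Involutions

section Transfer

variable {α β : Type*}

theorem mem_ringedSet_of_finite [Finite α] (f : Perm α) : f ∈ RingedSet α := Set.toFinite _

theorem mem_ringedSet_of_semiconj {f : Perm α} {g : Perm β} {j : α → β} (hj : Surjective j)
    (h : ∀ x, j (f x) = g (j x)) (hf : f ∈ RingedSet α) : g ∈ RingedSet β := by
  refine (hf.image (j '' ·)).subset ?_
  rintro _ ⟨y, rfl⟩
  obtain ⟨x, rfl⟩ := hj y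
  exact ⟨orbitOf f x, ⟨x, rfl⟩, image_orbitOf_of_semiconj h x⟩

theorem mem_wildSet_of_semiconj {f : Perm α} {g : Perm β} {j : α → β} (hj : Injective j)
    (h : ∀ x, j (f x) = g (j x)) (hf : f ∈ WildSet α) : g ∈ WildSet β := by
  refine (hf.image (Set.image_injective.2 hj).injOn).mono ?_
  rintro _ ⟨O, ⟨⟨x, rfl⟩, hO⟩, rfl⟩
  exact ⟨⟨j x, image_orbitOf_of_semiconj h x⟩, hO.image hj.injOn⟩

theorem permCongr_mem_ringedSet (e : α ≃ β) {f : Perm α} (hf : f ∈ RingedSet α) :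
    e.permCongr f ∈ RingedSet β :=
  mem_ringedSet_of_semiconj e.surjective (fun x => by simp) hf

theorem permCongr_mem_wildSet (e : α ≃ β) {f : Perm α} (hf : f ∈ WildSet α) :
    e.permCongr f ∈ WildSet β :=
  mem_wildSet_of_semiconj e.injective (fun x => by simp) hf

theorem sumCongr_mem_ringedSet {a : Perm α} {b : Perm β} (ha : a ∈ RingedSet α)
    (hb : b ∈ RingedSet β) : a.sumCongr b ∈ RingedSet (α ⊕ β) := by
  refine ((ha.image (Sum.inl '' ·)).union (hb.image (Sum.inr '' ·))).subset ?_
  rintro _ ⟨x | x, rfl⟩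
  · exact .inl ⟨orbitOf a x, ⟨x, rfl⟩,
      image_orbitOf_of_semiconj (j := Sum.inl) (g := a.sumCongr b) (fun _ => rfl) x⟩
  · exact .inr ⟨orbitOf b x, ⟨x, rfl⟩,
      image_orbitOf_of_semiconj (j := Sum.inr) (g := a.sumCongr b) (fun _ => rfl) x⟩

end Transfer

section Translation

variable {N : Type*} {f : Perm (ℤ × N)}

theorem fst_zpow_apply (hf : ∀ x, (f x).1 = x.1 + 1) (k : ℤ) (x : ℤ × N) :
    ((f ^ k) x).1 = x.1 + k := by
  induction k using Int.induction_on generalizing x with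
  | zero => simp
  | succ k ih => rw [zpow_add_one, mul_apply, ih, hf]; ring
  | pred k ih =>
    have hinv : (f⁻¹ x).1 = x.1 - 1 := by rw [eq_sub_iff_add_eq, ← hf]; simp
    rw [zpow_sub_one, mul_apply, ih, hinv]; ring

theorem orbitOf_infinite_of_fst_apply (hf : ∀ x, (f x).1 = x.1 + 1) (x : ℤ × N) :
    (orbitOf f x).Infinite :=
  Set.infinite_range_of_injective fun k l hkl => by
    simpa [fst_zpow_apply hf] using congrArg Prod.fst hkl

theorem orbitOf_eq_orbitOf_zero (hf : ∀ x, (f x).1 = x.1 + 1) (x : ℤ × N) :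
    orbitOf f x = orbitOf f (0, ((f ^ (-x.1)) x).2) := by
  rw [orbitOf_eq_orbitOf_iff]
  refine ⟨-x.1, Prod.ext ?_ rfl⟩
  rw [fst_zpow_apply hf]; ring

theorem mem_ringedSet_of_fst_apply [Finite N] (hf : ∀ x, (f x).1 = x.1 + 1) :
    f ∈ RingedSet (ℤ × N) := by
  refine (Set.finite_range fun m : N => orbitOf f (0, m)).subset ?_
  rintro _ ⟨x, rfl⟩
  exact ⟨_, (orbitOf_eq_orbitOf_zero hf x).symm⟩

theorem mem_wildSet_of_fst_apply [Infinite N] (hf : ∀ x, (f x).1 = x.1 + 1) :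
    f ∈ WildSet (ℤ × N) := by
  refine Set.infinite_of_injective_forall_mem (f := fun m : N => orbitOf f (0, m)) ?_
    fun m => ⟨⟨_, rfl⟩, orbitOf_infinite_of_fst_apply hf _⟩
  intro m m' h
  obtain ⟨k, hk⟩ := orbitOf_eq_orbitOf_iff.1 h
  have hk0 : k = 0 := by simpa [fst_zpow_apply hf] using congrArg Prod.fst hk
  simpa [hk0] using hk

end Translation

section Swap

theorem sumComm_eq_permCongr_mul_inv {A M : Type*} (e : ℤ × M ≃ A) :
    sumComm A A = ((prodSumDistrib ℤ M M).trans (e.sumCongr e)).permCongr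
      ((Equiv.addRight (1 : ℤ)).prodCongr (sumComm M M) *
        ((Equiv.addRight (1 : ℤ)).prodCongr (Equiv.refl _))⁻¹) := by
  ext (x | x) <;> simp [prodSumDistrib]

variable (A : Type*) [Countable A]

theorem exists_sumComm_eq_mul_inv_ringedSet :
    ∃ a b : Perm (A ⊕ A), a ∈ RingedSet _ ∧ b ∈ RingedSet _ ∧ sumComm A A = a * b⁻¹ := by
  rcases finite_or_infinite A with hA | hA
  · exact ⟨sumComm A A, 1, mem_ringedSet_of_finite _, mem_ringedSet_of_finite _, by simp⟩
  obtain ⟨e⟩ : Nonempty (ℤ × Unit ≃ A) := inferInstance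
  rw [sumComm_eq_permCongr_mul_inv e, ← permCongrHom_coe, map_mul, map_inv]
  exact ⟨_, _, permCongr_mem_ringedSet _ (mem_ringedSet_of_fst_apply fun _ => rfl),
    permCongr_mem_ringedSet _ (mem_ringedSet_of_fst_apply fun _ => rfl), rfl⟩

theorem exists_sumComm_eq_mul_inv_wildSet [Infinite A] :
    ∃ a b : Perm (A ⊕ A), a ∈ WildSet _ ∧ b ∈ WildSet _ ∧ sumComm A A = a * b⁻¹ := by
  obtain ⟨e⟩ : Nonempty (ℤ × ℕ ≃ A) := inferInstance
  rw [sumComm_eq_permCongr_mul_inv e, ← permCongrHom_coe, map_mul, map_inv]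
  exact ⟨_, _, permCongr_mem_wildSet _ (mem_wildSet_of_fst_apply fun _ => rfl),
    permCongr_mem_wildSet _ (mem_wildSet_of_fst_apply fun _ => rfl), rfl⟩

theorem exists_mem_ringedSet : ∃ w : Perm A, w ∈ RingedSet A := by
  rcases finite_or_infinite A with hA | hA
  · exact ⟨1, mem_ringedSet_of_finite 1⟩
  obtain ⟨e⟩ : Nonempty (ℤ × Unit ≃ A) := inferInstance
  exact ⟨_, permCongr_mem_ringedSet e
    (mem_ringedSet_of_fst_apply (f := (Equiv.addRight 1).prodCongr (Equiv.refl _)) fun _ => rfl)⟩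

theorem exists_mem_wildSet [Infinite A] : ∃ w : Perm A, w ∈ WildSet A := by
  obtain ⟨e⟩ : Nonempty (ℤ × ℕ ≃ A) := inferInstance
  exact ⟨_, permCongr_mem_wildSet e
    (mem_wildSet_of_fst_apply (f := (Equiv.addRight 1).prodCongr (Equiv.refl _)) fun _ => rfl)⟩

end Swap

section Generation

variable {α : Type*}

theorem involutive_mem_closure_ringedSet [Countable α] {t : Perm α} (ht : Involutive t) :
    t ∈ closure (RingedSet α) := by
  obtain ⟨T, F, E, rfl⟩ := ht.exists_permCongr_sumComm
  obtain ⟨a, b, ha, hb, hab⟩ := exists_sumComm_eq_mul_inv_ringedSet T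
  obtain ⟨w, hw⟩ := exists_mem_ringedSet F
  have hfac : (sumComm T T).sumCongr (1 : Perm F) = a.sumCongr w * (b.sumCongr w)⁻¹ := by
    rw [hab, sumCongr_inv, sumCongr_mul, mul_inv_cancel]
  rw [hfac, ← permCongrHom_coe, map_mul, map_inv]
  exact mul_mem (subset_closure (permCongr_mem_ringedSet E (sumCongr_mem_ringedSet ha hw)))
    (inv_mem (subset_closure (permCongr_mem_ringedSet E (sumCongr_mem_ringedSet hb hw))))

theorem involutive_mem_closure_wildSet [Countable α] [Infinite α] {t : Perm α}
    (ht : Involutive t) : t ∈ closure (WildSet α) := by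
  obtain ⟨T, F, E, rfl⟩ := ht.exists_permCongr_sumComm
  obtain ⟨a, b, ha, hb, hfac⟩ : ∃ a b : Perm ((T ⊕ T) ⊕ F), a ∈ WildSet _ ∧ b ∈ WildSet _ ∧
      (sumComm T T).sumCongr 1 = a * b⁻¹ := by
    rcases finite_or_infinite T with hT | hT
    · have : Infinite F := by
        have := Infinite.of_injective _ E.symm.injective
        simpa [infinite_sum, not_infinite_iff_finite.2 hT] using this
      obtain ⟨w, hw⟩ := exists_mem_wildSet F
      refine ⟨(sumComm T T).sumCongr w, (1 : Perm (T ⊕ T)).sumCongr w,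
        mem_wildSet_of_semiconj Sum.inr_injective (fun _ => rfl) hw,
        mem_wildSet_of_semiconj Sum.inr_injective (fun _ => rfl) hw, ?_⟩
      rw [sumCongr_inv, sumCongr_mul, mul_inv_cancel, inv_one, mul_one]
    · obtain ⟨a, b, ha, hb, hab⟩ := exists_sumComm_eq_mul_inv_wildSet T
      refine ⟨a.sumCongr 1, b.sumCongr 1,
        mem_wildSet_of_semiconj Sum.inl_injective (fun _ => rfl) ha,
        mem_wildSet_of_semiconj Sum.inl_injective (fun _ => rfl) hb, ?_⟩
      rw [hab, sumCongr_inv, sumCongr_mul, inv_one, mul_one]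
  rw [hfac, ← permCongrHom_coe, map_mul, map_inv]
  exact mul_mem (subset_closure (permCongr_mem_wildSet E ha))
    (inv_mem (subset_closure (permCongr_mem_wildSet E hb)))

end Generation

theorem LF_ringed_wild_generate {Ω : Type*} [Countable Ω] [Infinite Ω] :
    Subgroup.closure (LFset Ω) = ⊤ ∧ Subgroup.closure (RingedSet Ω) = ⊤ ∧
    Subgroup.closure (WildSet Ω) = ⊤ :=
  ⟨eq_top_of_involutive_mem fun _ ht => subset_closure (mem_LFset_of_isOfFinOrder ht.isOfFinOrder),
    eq_top_of_involutive_mem fun _ => involutive_mem_closure_ringedSet,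
    eq_top_of_involutive_mem fun _ => involutive_mem_closure_wildSet⟩
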